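/- arXiv:1604.00654 — 8 statements merged into one kernel-verified Lean document; each statement's English description precedes it below -/
import Mathlib

section
/- Let G be a simple graph on vertices x_1,...,x_n and k ≥ 1 an integer. Define the graph G_k on vertex set {x_{i,p} : 1 ≤ i ≤ n, 1 ≤ p ≤ k} with an edge {x_{i,p}, x_{j,q}} whenever {x_i, x_j} is an edge of G and p + q ≤ k + 1. If {w_1,...,w_h} is a minimal vertex cover of G, then the set {w_{i,p} : 1 ≤ i ≤ h, 1 ≤ p ≤ k} is a minimal vertex cover of G_k. -/
/-- The graph `G_k`: vertices `x_{i,p}` for `x_i ∈ V(G)` and `1 ≤ p ≤ k`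
(encoded 0-indexed as `p : Fin k`), with `x_{i,p}` adjacent to `x_{j,q}` iff
`x_i` is adjacent to `x_j` in `G` and `p + q ≤ k + 1` (1-indexed). -/
def graphPower {V : Type*} (G : SimpleGraph V) (k : ℕ) : SimpleGraph (V × Fin k) where
  Adj a b := G.Adj a.1 b.1 ∧ a.2.val + b.2.val + 2 ≤ k + 1
  symm := ⟨by rintro a b ⟨h1, h2⟩; exact ⟨h1.symm, by omega⟩⟩
  loopless := ⟨by rintro a ⟨h1, _⟩; exact G.irrefl h1⟩

/-- `C` is a vertex cover of `G`. -/
def IsVC {V : Type*} (G : SimpleGraph V) (C : Set V) : Prop :=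
  ∀ ⦃u v : V⦄, G.Adj u v → u ∈ C ∨ v ∈ C

/-- `C` is a minimal vertex cover of `G`. -/
def IsMinVC {V : Type*} (G : SimpleGraph V) (C : Set V) : Prop :=
  IsVC G C ∧ ∀ D : Set V, D ⊂ C → ¬ IsVC G D

/- Every vertex `x_{w,p}` of the cover has the neighbour `x_{v,1}` outside it, where `v ∉ C` is a
neighbour of `w` in `G`; a vertex cover all of whose vertices have a neighbour outside it is minimal. -/

lemma IsMinVC.exists_adj_notMem {V : Type*} {G : SimpleGraph V} {C : Set V} (hC : IsMinVC G C)
    {w : V} (hw : w ∈ C) : ∃ v, G.Adj w v ∧ v ∉ C := by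
  by_contra! h
  refine hC.2 (C \ {w}) (Set.sdiff_singleton_ssubset.2 hw) fun u v huv => ?_
  rcases eq_or_ne u w with rfl | hu
  · exact Or.inr ⟨h v huv, (G.ne_of_adj huv).symm⟩
  rcases eq_or_ne v w with rfl | hv
  · exact Or.inl ⟨h u huv.symm, G.ne_of_adj huv⟩
  exact (hC.1 huv).imp (fun hu' => ⟨hu', hu⟩) (fun hv' => ⟨hv', hv⟩)

lemma isMinVC_of_forall_exists_adj_notMem {V : Type*} {G : SimpleGraph V} {C : Set V}
    (hC : IsVC G C) (h : ∀ w ∈ C, ∃ v, G.Adj w v ∧ v ∉ C) : IsMinVC G C := by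
  refine ⟨hC, fun D hDC hD => ?_⟩
  obtain ⟨w, hwC, hwD⟩ := Set.exists_of_ssubset hDC
  obtain ⟨v, hwv, hvC⟩ := h w hwC
  exact (hD hwv).elim hwD fun hvD => hvC (hDC.subset hvD)

lemma IsVC.prod_univ {V : Type*} {G : SimpleGraph V} {C : Set V} (hC : IsVC G C) (k : ℕ) :
    IsVC (graphPower G k) (C ×ˢ (Set.univ : Set (Fin k))) := fun _ _ h =>
  (hC h.1).imp (fun hu => ⟨hu, trivial⟩) (fun hv => ⟨hv, trivial⟩)

lemma graphPower_adj_zero {V : Type*} {G : SimpleGraph V} {k : ℕ} (hk : 1 ≤ k) {u v : V}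
    (huv : G.Adj u v) (p : Fin k) : (graphPower G k).Adj (u, p) (v, ⟨0, hk⟩) :=
  ⟨huv, by have := p.isLt; dsimp only; omega⟩

/-- If `C = {w_1, …, w_h}` is a minimal vertex cover of `G`, then
`{w_{i,p} : w_i ∈ C, 1 ≤ p ≤ k}` is a minimal vertex cover of `G_k`. -/
theorem stmt0 {V : Type*} (G : SimpleGraph V) (k : ℕ) (hk : 1 ≤ k)
    (C : Set V) (hC : IsMinVC G C) :
    IsMinVC (graphPower G k) (C ×ˢ (Set.univ : Set (Fin k))) := by
  refine isMinVC_of_forall_exists_adj_notMem (hC.1.prod_univ k) ?_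
  rintro ⟨w, p⟩ ⟨hw, -⟩
  obtain ⟨v, hwv, hv⟩ := hC.exists_adj_notMem hw
  exact ⟨(v, ⟨0, hk⟩), graphPower_adj_zero hk hwv p, fun h => hv h.1⟩
end

section
/- Let G be a very well-covered graph (on an even number n of vertices, with no isolated vertices, in which every maximal independent set has cardinality n/2) and k ≥ 1. Then the graph G_k (on nk vertices, with edges {x_{i,p},x_{j,q}} iff {x_i,x_j} ∈ E(G) and p+q ≤ k+1) is very well-covered, i.e., every maximal independent set of G_k has size nk/2. -/
/-- `A` is an independent set of `G`. -/
def IsIndep {V : Type*} (G : SimpleGraph V) (A : Set V) : Prop :=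
  ∀ u ∈ A, ∀ v ∈ A, ¬ G.Adj u v

/-- `A` is a maximal independent set of `G`. -/
def IsMaxIndep {V : Type*} (G : SimpleGraph V) (A : Set V) : Prop :=
  IsIndep G A ∧ ∀ B : Set V, IsIndep G B → A ⊆ B → B = A

/-!
Let `n = |V|`. Fix a maximal independent set `S` of `G`. Exchanging a set of vertices of `S`
with their common private neighbourhood would produce an independent set that is too large, which
yields Hall's condition from `S` into its complement; as `|S| = n/2` this gives a perfect matching,
and since every maximal independent set has `n/2` vertices, each of them meets every matching edge.

For a maximal independent set `B` of `G_k` let `L_p` be its `p`-th layer. The layers increase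
with `p`, and when `p + q = k - 1` (layers are indexed from `0`) each of `L_p`, `L_q` is the set of
vertices with no neighbour in the other. For such a pair with `L_p ⊆ L_q`, every matching edge
has exactly two of its four incidences in `L_p` and `L_q`, so `|L_p| + |L_q| = n`; summing over
`p` gives `2|B| = nk`.
-/

open scoped Classical

section Independence

variable {V : Type*} {G : SimpleGraph V} {A B : Set V} {x : V}

theorem IsIndep.mono (hB : IsIndep G B) (hAB : A ⊆ B) : IsIndep G A :=
  fun u hu v hv => hB u (hAB hu) v (hAB hv)

theorem isIndep_union :
    IsIndep G (A ∪ B) ↔ IsIndep G A ∧ IsIndep G B ∧ ∀ a ∈ A, ∀ b ∈ B, ¬ G.Adj a b := by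
  refine ⟨fun h => ⟨h.mono Set.subset_union_left, h.mono Set.subset_union_right,
    fun a ha b hb => h a (.inl ha) b (.inr hb)⟩, ?_⟩
  rintro ⟨hA, hB, hAB⟩ u (hu | hu) v (hv | hv)
  · exact hA u hu v hv
  · exact hAB u hu v hv
  · exact fun h => hAB v hv u hu h.symm
  · exact hB u hu v hv

theorem IsIndep.insert (hA : IsIndep G A) (hx : ∀ a ∈ A, ¬ G.Adj x a) :
    IsIndep G (insert x A) := by
  rw [Set.insert_eq, isIndep_union]
  exact ⟨fun u hu v hv => hu ▸ hv ▸ G.irrefl, hA, fun u hu => hu ▸ hx⟩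

theorem isMaxIndep_iff_maximal : IsMaxIndep G A ↔ Maximal (IsIndep G) A :=
  and_congr_right fun _ =>
    ⟨fun h _ hB hAB => (h _ hB hAB).le, fun h _ hB hAB => (h hB hAB).antisymm hAB⟩

theorem IsMaxIndep.mem_iff (hA : IsMaxIndep G A) : x ∈ A ↔ ∀ a ∈ A, ¬ G.Adj x a := by
  refine ⟨fun hx a ha => hA.1 x hx a ha, fun hx => ?_⟩
  rw [← hA.2 _ (hA.1.insert hx) (Set.subset_insert x A)]
  exact Set.mem_insert x A

theorem IsIndep.exists_isMaxIndep_superset [Finite V] (hA : IsIndep G A) :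
    ∃ T, IsMaxIndep G T ∧ A ⊆ T := by
  obtain ⟨T, hAT, hT⟩ := Finite.exists_le_maximal hA
  exact ⟨T, isMaxIndep_iff_maximal.2 hT, hAT⟩

def IsWellCovered (G : SimpleGraph V) (c : ℕ) : Prop :=
  ∀ A, IsMaxIndep G A → A.ncard = c

theorem IsWellCovered.ncard_le [Finite V] {c : ℕ} (hG : IsWellCovered G c) (hA : IsIndep G A) :
    A.ncard ≤ c := by
  obtain ⟨T, hT, hAT⟩ := hA.exists_isMaxIndep_superset
  exact hG T hT ▸ Set.ncard_le_ncard hAT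

def nbhd (G : SimpleGraph V) (X : Set V) : Set V := {v | ∃ x ∈ X, G.Adj x v}

@[simp] theorem nbhd_empty : nbhd G ∅ = ∅ := by simp [nbhd]

theorem nbhd_insert : nbhd G (insert x A) = G.neighborSet x ∪ nbhd G A := by
  ext; simp [nbhd]

end Independence

section Hall

variable {V : Type*} [Finite V] {G : SimpleGraph V} {c : ℕ}

theorem IsWellCovered.ncard_le_of_forall_adj (hG : IsWellCovered G c) {W C Z : Set V} {z : V}
    (hWC : IsIndep G (W ∪ C)) (hz : z ∉ nbhd G W) (hCz : ∀ y ∈ C, G.Adj y z)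
    (hCZ : ∀ y ∈ C, G.neighborSet y ⊆ Z ∪ nbhd G W) : C.ncard ≤ Z.ncard := by
  obtain ⟨hW, hC, -⟩ := isIndep_union.1 hWC
  obtain ⟨U, hU, hzWU⟩ :=
    (hW.insert fun w hw h => hz ⟨w, hw, h.symm⟩).exists_isMaxIndep_superset
  have hzU : z ∈ U := hzWU (Set.mem_insert z W)
  have hU_nbhd : ∀ u ∈ U, u ∉ nbhd G W := fun u hu ⟨w, hw, hwu⟩ =>
    hU.1 w (hzWU (Set.mem_insert_of_mem z hw)) u hu hwu
  have hdisj : Disjoint (U \ Z) C :=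
    Set.disjoint_left.2 fun y hyU hyC => hU.1 y hyU.1 z hzU (hCz y hyC)
  have hswap : IsIndep G ((U \ Z) ∪ C) := isIndep_union.2 ⟨hU.1.mono Set.sdiff_subset, hC,
    fun u hu y hy hyu => (hCZ y hy hyu.symm).elim hu.2 (hU_nbhd u hu.1)⟩
  have hswap_le := hG.ncard_le hswap
  rw [Set.ncard_union_eq hdisj] at hswap_le
  have hU_le := Set.ncard_le_ncard_sdiff_add_ncard U Z
  have hU_card := hG U hU
  omega

theorem IsWellCovered.ncard_le_ncard_nbhd_sdiff (hG : IsWellCovered G c) {Y W : Set V}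
    (hYW : IsIndep G (Y ∪ W)) (hY : ∀ y ∈ Y, (G.neighborSet y \ nbhd G W).Nonempty) :
    Y.ncard ≤ (nbhd G Y \ nbhd G W).ncard := by
  induction hn : Y.ncard using Nat.strong_induction_on generalizing Y W with
  | _ n ih =>
  subst hn
  rcases Y.eq_empty_or_nonempty with rfl | hYne
  · simp
  -- `Z` is an inclusion-minimal private neighbourhood (relative to `W`); the vertices `C` of `Y`
  -- whose private neighbourhoods lie in `Z` fit into `Z`, and `Y \ C` is handled by induction
  -- after `y₀` joins `W`.
  obtain ⟨y₀, hy₀, hmin⟩ :=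
    Y.toFinite.exists_minimalFor (fun y => G.neighborSet y \ nbhd G W) Y hYne
  set Z := G.neighborSet y₀ \ nbhd G W
  set C := {y ∈ Y | G.neighborSet y \ nbhd G W ⊆ Z}
  obtain ⟨z, hz⟩ := hY y₀ hy₀
  have hCZ : C.ncard ≤ Z.ncard := by
    refine hG.ncard_le_of_forall_adj (hYW.mono ?_) hz.2 (fun y hy => (hmin hy.1 hy.2 hz).1) ?_
    · rintro v (hv | hv)
      · exact .inr hv
      · exact .inl hv.1
    · intro y hy v hv
      by_cases hvW : v ∈ nbhd G W
      · exact .inr hvW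
      · exact .inl (hy.2 ⟨hv, hvW⟩)
  have hCY : C ⊆ Y := fun y hy => hy.1
  have hy₀C : y₀ ∈ C := ⟨hy₀, subset_rfl⟩
  have hZ : Z ⊆ nbhd G Y \ nbhd G W := fun v hv => ⟨⟨y₀, hy₀, hv.1⟩, hv.2⟩
  have hYC := Set.ncard_sdiff_add_ncard_of_subset hCY
  have hCpos : 0 < C.ncard := (Set.ncard_pos).2 ⟨y₀, hy₀C⟩
  have hrest : (Y \ C).ncard ≤ (nbhd G (Y \ C) \ nbhd G (insert y₀ W)).ncard := by
    refine ih _ (by omega) (hYW.mono ?_) (fun y hy => ?_) rfl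
    · rintro v (hv | rfl | hv)
      · exact .inl hv.1
      · exact .inl hy₀
      · exact .inr hv
    obtain ⟨v, hv, hvZ⟩ := Set.not_subset.1 fun h => hy.2 ⟨hy.1, h⟩
    refine ⟨v, hv.1, ?_⟩
    rw [nbhd_insert]
    rintro (hv₀ | hvW)
    exacts [hvZ ⟨hv₀, hv.2⟩, hv.2 hvW]
  have hsub : nbhd G (Y \ C) \ nbhd G (insert y₀ W) ⊆ (nbhd G Y \ nbhd G W) \ Z := by
    rintro v ⟨⟨y, hy, hyv⟩, hv⟩
    rw [nbhd_insert] at hv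
    exact ⟨⟨⟨y, hy.1, hyv⟩, fun h => hv (.inr h)⟩, fun h => hv (.inl h.1)⟩
  have hsub_le := Set.ncard_le_ncard hsub
  have hZ_card := Set.ncard_sdiff_add_ncard_of_subset hZ
  omega

theorem IsWellCovered.ncard_le_ncard_nbhd (hG : IsWellCovered G c) (hiso : ∀ v, ∃ u, G.Adj v u)
    {Y : Set V} (hY : IsIndep G Y) : Y.ncard ≤ (nbhd G Y).ncard := by
  simpa using hG.ncard_le_ncard_nbhd_sdiff (W := ∅) (by simpa using hY)
    fun y _ => let ⟨u, hu⟩ := hiso y; ⟨u, hu, fun ⟨_, h, _⟩ => h⟩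

end Hall

section Pairing

variable {V : Type*} [Fintype V] {G : SimpleGraph V} {S : Set V}

theorem ncard_eq_sum_ite (X : Set V) : X.ncard = ∑ v, if v ∈ X then 1 else 0 := by
  simp [Set.ncard_eq_toFinset_card', Finset.sum_boole]

theorem ncard_eq_sum_pair (e : S ≃ ↥Sᶜ) (X : Set V) :
    X.ncard = ∑ s : S, ((if ↑s ∈ X then 1 else 0) + if ↑(e s) ∈ X then 1 else 0) := by
  rw [Finset.sum_add_distrib, e.sum_comp (fun t : ↥Sᶜ => if ↑t ∈ X then 1 else 0),
    ncard_eq_sum_ite]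
  exact (Fintype.sum_subtype_add_sum_subtype (· ∈ S) _).symm

theorem mem_or_mem_of_ncard_le (e : S ≃ ↥Sᶜ) (he : ∀ s : S, G.Adj s (e s)) {T : Set V}
    (hT : IsIndep G T) (hST : S.ncard ≤ T.ncard) (s : S) : ↑s ∈ T ∨ ↑(e s) ∈ T := by
  have hle (s : S) : ((if ↑s ∈ T then 1 else 0) + if ↑(e s) ∈ T then 1 else 0) ≤ 1 := by
    by_cases hs : ↑s ∈ T
    · have hes : ↑(e s) ∉ T := fun hes => hT _ hs _ hes (he s)
      simp [hs, hes]
    · simp only [hs, if_false, zero_add]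
      split_ifs <;> simp
  have hsum :
      ∑ s : S, ((if ↑s ∈ T then 1 else 0) + if ↑(e s) ∈ T then 1 else 0) = ∑ s : S, 1 := by
    refine le_antisymm (Finset.sum_le_sum fun s _ => hle s) ?_
    rw [← ncard_eq_sum_pair e T]
    simpa [Set.ncard_eq_toFinset_card'] using hST
  have hs := (Finset.sum_eq_sum_iff_of_le fun s _ => hle s).1 hsum s (Finset.mem_univ s)
  by_contra h
  simp [not_or.1 h] at hs

theorem IsWellCovered.exists_matching_meeting_isMaxIndep
    (hG : IsWellCovered G (Fintype.card V / 2)) (heven : Even (Fintype.card V))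
    (hiso : ∀ v, ∃ u, G.Adj v u) :
    ∃ (S : Set V) (e : S ≃ ↥Sᶜ), (∀ s : S, G.Adj s (e s)) ∧
      ∀ T, IsMaxIndep G T → ∀ s : S, ↑s ∈ T ∨ ↑(e s) ∈ T := by
  obtain ⟨S, hS, -⟩ := (show IsIndep G ∅ from fun u hu => hu.elim).exists_isMaxIndep_superset
  have hall (A : Finset S) : A.card ≤ (Finset.univ.filter fun v => ∃ a ∈ A, G.Adj a v).card := by
    have := hG.ncard_le_ncard_nbhd hiso (hS.1.mono (A := Subtype.val '' (A : Set S))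
      (Set.image_subset_iff.2 fun s _ => s.2))
    rw [Set.ncard_image_of_injective _ Subtype.val_injective, Set.ncard_coe_finset] at this
    refine this.trans_eq ?_
    rw [← Set.ncard_coe_finset]
    congr 1
    ext v
    simp [nbhd]
  obtain ⟨f, hf_inj, hf_adj⟩ := (Fintype.all_card_le_filter_rel_iff_exists_injective _).1 hall
  have hfS (s : S) : f s ∈ Sᶜ := fun hs => hS.1 s s.2 (f s) hs (hf_adj s)
  have hcard : Fintype.card S = Fintype.card ↥Sᶜ := by
    have hSc := hG S hS
    rw [← Nat.card_coe_set_eq, Nat.card_eq_fintype_card] at hSc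
    rw [Fintype.card_compl_set, hSc]
    obtain ⟨r, hr⟩ := heven
    omega
  let e : S ≃ ↥Sᶜ := Equiv.ofBijective (fun s => ⟨f s, hfS s⟩)
    ((Fintype.bijective_iff_injective_and_card _).2
      ⟨fun a b h => hf_inj (congrArg Subtype.val h), hcard⟩)
  exact ⟨S, e, hf_adj, fun T hT =>
    mem_or_mem_of_ncard_le e hf_adj hT.1 (by rw [hG T hT, hG S hS])⟩

end Pairing

section NbhdComplPair

variable {V : Type*} {G : SimpleGraph V} {A C : Set V} {x y : V}

theorem mem_of_notMem_of_forall_mem_or_mem [Finite V] (hAC : A ⊆ C) (hA : A = (nbhd G C)ᶜ)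
    (hC : C = (nbhd G A)ᶜ) (hcover : ∀ T, IsMaxIndep G T → x ∈ T ∨ y ∈ T) (hx : x ∉ A) :
    y ∈ C := by
  have hC' (v : V) : v ∈ C ↔ v ∉ nbhd G A := by rw [hC]; rfl
  have hAi : IsIndep G A := fun a ha b hb hab => (hC' b).1 (hAC hb) ⟨a, ha, hab⟩
  obtain ⟨u, hu, hux⟩ : ∃ u ∈ C, G.Adj u x := by simpa [hA, nbhd] using hx
  obtain ⟨T, hT, huAT⟩ :=
    (hAi.insert fun a ha hua => (hC' u).1 hu ⟨a, ha, hua.symm⟩).exists_isMaxIndep_superset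
  have hTC : T ⊆ C := fun t ht => (hC' t).2 fun ⟨a, ha, hat⟩ =>
    hT.1 a (huAT (Set.mem_insert_of_mem u ha)) t ht hat
  exact hTC ((hcover T hT).resolve_left fun hxT => hT.1 u (huAT (Set.mem_insert u A)) x hxT hux)

theorem pair_count_eq_two [Finite V] (hAC : A ⊆ C) (hA : A = (nbhd G C)ᶜ)
    (hC : C = (nbhd G A)ᶜ) (hxy : G.Adj x y) (hcover : ∀ T, IsMaxIndep G T → x ∈ T ∨ y ∈ T) :
    ((if x ∈ A then 1 else 0) + if y ∈ A then 1 else 0) +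
      ((if x ∈ C then 1 else 0) + if y ∈ C then 1 else 0) = 2 := by
  have hC' (v : V) : v ∈ C ↔ v ∉ nbhd G A := by rw [hC]; rfl
  by_cases hx : x ∈ A
  · have hyA : y ∉ A := fun hy => (hC' y).1 (hAC hy) ⟨x, hx, hxy⟩
    have hyC : y ∉ C := fun hy => (hC' y).1 hy ⟨x, hx, hxy⟩
    simp [hx, hyA, hAC hx, hyC]
  by_cases hy : y ∈ A
  · have hxC : x ∉ C := fun h => (hC' x).1 h ⟨y, hy, hxy.symm⟩
    simp [hx, hy, hAC hy, hxC]
  have hyC := mem_of_notMem_of_forall_mem_or_mem hAC hA hC hcover hx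
  have hxC := mem_of_notMem_of_forall_mem_or_mem hAC hA hC (fun T hT => (hcover T hT).symm) hy
  simp [hx, hy, hxC, hyC]

theorem ncard_add_ncard_eq_card [Fintype V] {S : Set V} (e : S ≃ ↥Sᶜ)
    (he : ∀ s : S, G.Adj s (e s)) (hcover : ∀ T, IsMaxIndep G T → ∀ s : S, ↑s ∈ T ∨ ↑(e s) ∈ T)
    (hAC : A ⊆ C) (hA : A = (nbhd G C)ᶜ) (hC : C = (nbhd G A)ᶜ) :
    A.ncard + C.ncard = Fintype.card V := by
  rw [ncard_eq_sum_pair e A, ncard_eq_sum_pair e C, ← Finset.sum_add_distrib,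
    ← Nat.card_eq_fintype_card, ← Set.ncard_univ, ncard_eq_sum_pair e Set.univ]
  refine Finset.sum_congr rfl fun s _ => ?_
  simpa using pair_count_eq_two hAC hA hC (he s) (fun T hT => hcover T hT s)

end NbhdComplPair

section Layers

variable {V ι : Type*}

def layer (B : Set (V × ι)) (i : ι) : Set V := {v | (v, i) ∈ B}

theorem ncard_eq_sum_ncard_layer [Fintype V] [Fintype ι] (B : Set (V × ι)) :
    B.ncard = ∑ i, (layer B i).ncard := by
  simp only [ncard_eq_sum_ite]
  rw [Fintype.sum_prod_type_right]
  rfl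

variable {G : SimpleGraph V} {k : ℕ} {B : Set (V × Fin k)}

theorem layer_mono (hB : IsMaxIndep (graphPower G k) B) {p q : Fin k} (hpq : p ≤ q) :
    layer B p ⊆ layer B q := fun v hv =>
  hB.mem_iff.2 fun ⟨_, r⟩ hu ⟨hvu, hqr⟩ =>
    hB.1 _ hv _ hu ⟨hvu, show p.val + r.val + 2 ≤ k + 1 by simp at hqr; omega⟩

theorem layer_eq_compl_nbhd (hB : IsMaxIndep (graphPower G k) B) {p q : Fin k}
    (hpq : p.val + q.val + 2 = k + 1) : layer B p = (nbhd G (layer B q))ᶜ := by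
  ext v
  refine ⟨fun hv ⟨u, hu, huv⟩ => hB.1 _ hv _ hu ⟨huv.symm, hpq.le⟩, fun hv => hB.mem_iff.2 ?_⟩
  rintro ⟨u, r⟩ hu ⟨hvu, hpr⟩
  exact hv ⟨u, layer_mono hB (show r ≤ q by simp at hpr; omega) hu, hvu.symm⟩

theorem ncard_layer_add_ncard_layer_rev [Fintype V] (hB : IsMaxIndep (graphPower G k) B)
    {S : Set V} (e : S ≃ ↥Sᶜ) (he : ∀ s : S, G.Adj s (e s))
    (hcover : ∀ T, IsMaxIndep G T → ∀ s : S, ↑s ∈ T ∨ ↑(e s) ∈ T) (p : Fin k) :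
    (layer B p).ncard + (layer B p.rev).ncard = Fintype.card V := by
  have hp : p.val + p.rev.val + 2 = k + 1 := by rw [Fin.val_rev]; omega
  have hp' : p.rev.val + p.val + 2 = k + 1 := by omega
  rcases le_total p p.rev with h | h
  · exact ncard_add_ncard_eq_card e he hcover (layer_mono hB h)
      (layer_eq_compl_nbhd hB hp) (layer_eq_compl_nbhd hB hp')
  · rw [add_comm]
    exact ncard_add_ncard_eq_card e he hcover (layer_mono hB h)
      (layer_eq_compl_nbhd hB hp') (layer_eq_compl_nbhd hB hp)

end Layers

theorem stmt2_general {V : Type*} [Fintype V] (G : SimpleGraph V)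
    (heven : Even (Fintype.card V))
    (hiso : ∀ v : V, ∃ u, G.Adj v u)
    (hwc : ∀ A : Set V, IsMaxIndep G A → A.ncard = Fintype.card V / 2)
    (k : ℕ) :
    ∀ B : Set (V × Fin k), IsMaxIndep (graphPower G k) B →
      B.ncard = Fintype.card V * k / 2 := by
  intro B hB
  obtain ⟨S, e, he, hcover⟩ := IsWellCovered.exists_matching_meeting_isMaxIndep hwc heven hiso
  have hrev : ∑ p : Fin k, (layer B p.rev).ncard = ∑ p, (layer B p).ncard :=
    Equiv.sum_comp Fin.revPerm fun p => (layer B p).ncard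
  have hdouble : 2 * B.ncard = Fintype.card V * k := by
    rw [two_mul, ncard_eq_sum_ncard_layer]
    nth_rw 2 [← hrev]
    rw [← Finset.sum_add_distrib, Finset.sum_congr rfl fun p _ =>
      ncard_layer_add_ncard_layer_rev hB e he hcover p]
    simp [mul_comm]
  omega

/-- If `G` is very well-covered (even number of vertices, no isolated vertices, and
every maximal independent set has cardinality `n/2`), then `G_k` is very well-covered:
every maximal independent set of `G_k` has cardinality `nk/2`. -/
theorem stmt2 {V : Type*} [Fintype V] (G : SimpleGraph V)
    (heven : Even (Fintype.card V))
    (hiso : ∀ v : V, ∃ u, G.Adj v u)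
    (hwc : ∀ A : Set V, IsMaxIndep G A → A.ncard = Fintype.card V / 2)
    (k : ℕ) (hk : 1 ≤ k) :
    ∀ B : Set (V × Fin k), IsMaxIndep (graphPower G k) B →
      B.ncard = Fintype.card V * k / 2 :=
  stmt2_general G heven hiso hwc k
end

section
/- Let G be a graph whose vertices are labeled w_1,...,w_h, z_1,...,z_h satisfying conditions (i)-(iv) as above. Then in G_k, with a_i corresponding to w_{m,p} and b_j corresponding to z_{q,k+1-r}: if {b_i,a_j} and {b_j,a_l} are edges of G_k with i,j,l distinct, then {b_i,a_l} is an edge of G_k. -/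
/-- Condition (iii) with `y = z_i`, extended by (ii) to the cases where `i`, `j`, `l` are not
distinct. -/
theorem adj_inr_inl_trans {h : ℕ} {G : SimpleGraph (Fin h ⊕ Fin h)}
    (hperf : ∀ i : Fin h, G.Adj (Sum.inl i) (Sum.inr i))
    (hiii : ∀ i j l : Fin h, i ≠ j → j ≠ l → i ≠ l →
      ∀ y : Fin h ⊕ Fin h, (y = Sum.inl i ∨ y = Sum.inr i) →
      G.Adj y (Sum.inl j) → G.Adj (Sum.inr j) (Sum.inl l) → G.Adj y (Sum.inl l))
    {m q s : Fin h} (hmq : G.Adj (Sum.inr m) (Sum.inl q)) (hqs : G.Adj (Sum.inr q) (Sum.inl s)) :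
    G.Adj (Sum.inr m) (Sum.inl s) := by
  by_cases hms : m = s
  · exact hms ▸ (hperf m).symm
  by_cases hmq' : m = q
  · exact hmq' ▸ hqs
  by_cases hqs' : q = s
  · exact hqs' ▸ hmq
  exact hiii m q s hmq' hqs' hms _ (Or.inr rfl) hmq hqs

/-- `w_i` is `Sum.inl i`, `z_i` is `Sum.inr i`, and copies are 0-indexed, so that `z_{m,k+1-p}`
becomes `(Sum.inr m, k - 1 - p)`. -/
theorem stmt4 (h k : ℕ) (G : SimpleGraph (Fin h ⊕ Fin h))
    -- (ii) `{w_i, z_i} ∈ E(G)`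
    (hperf : ∀ i : Fin h, G.Adj (Sum.inl i) (Sum.inr i))
    -- (iii)
    (hiii : ∀ i j l : Fin h, i ≠ j → j ≠ l → i ≠ l →
      ∀ y : Fin h ⊕ Fin h, (y = Sum.inl i ∨ y = Sum.inr i) →
      G.Adj y (Sum.inl j) → G.Adj (Sum.inr j) (Sum.inl l) → G.Adj y (Sum.inl l))
    (m q s : Fin h) (p r t : Fin k)
    (e1 : (graphPower G k).Adj
      (Sum.inr m, ⟨k - 1 - p.val, by have := p.2; omega⟩) (Sum.inl q, r))
    (e2 : (graphPower G k).Adj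
      (Sum.inr q, ⟨k - 1 - r.val, by have := r.2; omega⟩) (Sum.inl s, t)) :
    (graphPower G k).Adj
      (Sum.inr m, ⟨k - 1 - p.val, by have := p.2; omega⟩) (Sum.inl s, t) := by
  obtain ⟨hmq, hrp⟩ := e1
  obtain ⟨hqs, htr⟩ := e2
  -- the copy conditions say `r ≤ p` and `t ≤ r`
  refine ⟨adj_inr_inl_trans hperf hiii hmq hqs, ?_⟩
  simp only at hrp htr ⊢
  omega
end

section
/- For variables x and y in a polynomial ring and k ≥ 1, the polarization of the ideal (x,y)^k equals ⋂_{p+q ≤ k+1, p,q ≥ 1} (x_p, y_q), where (x,y)^k is generated by the monomials x^a y^b with a+b = k, whose polarizations are x_1⋯x_a · y_1⋯y_b. -/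
open MvPolynomial

/-! Both sides are monomial ideals, so membership can be tested on each monomial `m` of the
support: `m` is in the left ideal iff `x_1 ⋯ x_a y_1 ⋯ y_b ∣ m` for some `a + b = k`, and in the
right one iff `x_p ∣ m` or `y_q ∣ m` whenever `p + q ≤ k + 1`. If `x_{a+1}` is the first `x`-variable
not dividing `m` and `a < k`, the second condition with `p = a + 1` forces `y_1, …, y_{k-a} ∣ m`. -/

noncomputable def polarExponent (a b : ℕ) : (Bool × ℕ) →₀ ℕ :=
  ∑ t ∈ Finset.range a, Finsupp.single (true, t) 1 +
    ∑ t ∈ Finset.range b, Finsupp.single (false, t) 1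

lemma polarExponent_apply_true (a b u : ℕ) :
    polarExponent a b (true, u) = if u < a then 1 else 0 := by
  simp [polarExponent, Finsupp.single_apply]

lemma polarExponent_apply_false (a b u : ℕ) :
    polarExponent a b (false, u) = if u < b then 1 else 0 := by
  simp [polarExponent, Finsupp.single_apply]

lemma polarExponent_le_iff {a b : ℕ} {m : (Bool × ℕ) →₀ ℕ} :
    polarExponent a b ≤ m ↔ (∀ t < a, m (true, t) ≠ 0) ∧ ∀ t < b, m (false, t) ≠ 0 := by
  have indicator_le {n : ℕ} {f : ℕ → ℕ} :
      (∀ u, (if u < n then 1 else 0) ≤ f u) ↔ ∀ u < n, f u ≠ 0 := by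
    refine forall_congr' fun u => ?_
    split_ifs with h <;> simp [h, Nat.one_le_iff_ne_zero]
  simp only [Finsupp.le_def, Prod.forall, Bool.forall_bool, polarExponent_apply_true,
    polarExponent_apply_false, indicator_le, and_comm]

lemma prod_X_mul_prod_X_eq_monomial_polarExponent {R : Type*} [CommSemiring R] (a b : ℕ) :
    (∏ t ∈ Finset.range a, X (true, t)) * ∏ t ∈ Finset.range b, X (false, t) =
      (monomial (polarExponent a b) 1 : MvPolynomial (Bool × ℕ) R) := by
  rw [polarExponent, ← mul_one (1 : R), ← monomial_mul, monomial_sum_one, monomial_sum_one]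
  rfl

lemma exists_add_eq_forall_lt_iff (P Q : ℕ → Prop) (k : ℕ) :
    (∃ a b, a + b = k ∧ (∀ t < a, P t) ∧ ∀ t < b, Q t) ↔
      ∀ p q, p + q + 2 ≤ k + 1 → P p ∨ Q q := by
  constructor
  · rintro ⟨a, b, rfl, hP, hQ⟩ p q hpq
    by_cases hp : p < a
    · exact .inl (hP p hp)
    · exact .inr (hQ q (by omega))
  · intro H
    by_cases hall : ∀ t < k, P t
    · exact ⟨k, 0, rfl, hall, by simp⟩
    classical
    obtain ⟨t₀, ht₀k, ht₀⟩ : ∃ t < k, ¬P t := by simpa using hall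
    have hex : ∃ t, ¬P t := ⟨t₀, ht₀⟩
    have hak : Nat.find hex < k := (Nat.find_le ht₀).trans_lt ht₀k
    refine ⟨Nat.find hex, k - Nat.find hex, by omega,
      fun t ht => not_not.1 (Nat.find_min hex ht), fun t ht => ?_⟩
    exact (H _ t (by omega)).resolve_left (Nat.find_spec hex)

lemma exists_polarExponent_le_iff (m : (Bool × ℕ) →₀ ℕ) (k : ℕ) :
    (∃ a b, a + b = k ∧ polarExponent a b ≤ m) ↔
      ∀ p q, p + q + 2 ≤ k + 1 → m (true, p) ≠ 0 ∨ m (false, q) ≠ 0 := by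
  simp only [polarExponent_le_iff]
  exact exists_add_eq_forall_lt_iff _ _ k

theorem stmt11_general (K : Type*) [Field K] (k : ℕ) :
    Ideal.span {m : MvPolynomial (Bool × ℕ) K | ∃ a b : ℕ, a + b = k ∧
        m = (∏ t ∈ Finset.range a, X (true, t)) * ∏ t ∈ Finset.range b, X (false, t)}
      = ⨅ (p : ℕ) (q : ℕ) (_ : p + q + 2 ≤ k + 1),
          Ideal.span {X (true, p), X (false, q)} := by
  have generators : {m : MvPolynomial (Bool × ℕ) K | ∃ a b : ℕ, a + b = k ∧
        m = (∏ t ∈ Finset.range a, X (true, t)) * ∏ t ∈ Finset.range b, X (false, t)} =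
      (monomial · 1) '' {s | ∃ a b : ℕ, a + b = k ∧ s = polarExponent a b} := by
    ext m
    simp only [prod_X_mul_prod_X_eq_monomial_polarExponent, Set.mem_image]
    grind
  have pair (p q : ℕ) : ({X (true, p), X (false, q)} : Set (MvPolynomial (Bool × ℕ) K)) =
      X '' {(true, p), (false, q)} := by
    rw [Set.image_insert_eq, Set.image_singleton]
  ext f
  simp only [generators, mem_ideal_span_monomial_image, Ideal.mem_iInf, pair,
    mem_ideal_span_X_image]
  simp only [Set.mem_ofPred_eq, Set.mem_insert_iff, Set.mem_singleton_iff, exists_eq_or_imp,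
    exists_eq_left]
  constructor
  · intro H p q hpq m hm
    obtain ⟨_, ⟨a, b, hab, rfl⟩, hle⟩ := H m hm
    exact (exists_polarExponent_le_iff m k).1 ⟨a, b, hab, hle⟩ p q hpq
  · intro H m hm
    obtain ⟨a, b, hab, hle⟩ := (exists_polarExponent_le_iff m k).2 fun p q hpq => H p q hpq m hm
    exact ⟨_, ⟨a, b, hab, rfl⟩, hle⟩

/-- In the polarized ring `K[x_1, x_2, …, y_1, y_2, …]` (variables indexed by
`Bool × ℕ`, 0-indexed copies: `(true, t)` is `x_{t+1}` and `(false, t)` is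
`y_{t+1}`), for `k ≥ 1` the ideal generated by the polarizations
`x_1 ⋯ x_a · y_1 ⋯ y_b` (for `a + b = k`) of the generators `x^a y^b` of
`(x,y)^k` equals `⋂_{p+q ≤ k+1, p,q ≥ 1} (x_p, y_q)` (0-indexed:
`p + q + 2 ≤ k + 1`). -/
theorem stmt11 (K : Type*) [Field K] (k : ℕ) (hk : 1 ≤ k) :
    Ideal.span {m : MvPolynomial (Bool × ℕ) K | ∃ a b : ℕ, a + b = k ∧
        m = (∏ t ∈ Finset.range a, X (true, t)) * ∏ t ∈ Finset.range b, X (false, t)}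
      = ⨅ (p : ℕ) (q : ℕ) (_ : p + q + 2 ≤ k + 1),
          Ideal.span {X (true, p), X (false, q)} :=
  stmt11_general K k
end

section
/- A monomial ideal I ⊆ K[x_1,...,x_n] has linear quotients if and only if its polarization I^{pol} has linear quotients. Concretely, using the characterization: the minimal generators of I can be ordered u_1,...,u_m such that for all j < i there exist k < i and a variable x_p with u_k / gcd(u_k,u_i) = x_p and x_p dividing u_j / gcd(u_j,u_i), if and only if the same holds for the polarized generators u_1^{pol},...,u_m^{pol}. -/
/-- The "polarization support" of a monomial with exponent vector `d`: the set of
polarized variables `x_{q,t}` (with `t < d q`, 0-indexed) occurring in the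
squarefree polarization of `x^d`. -/
def polSupp {V : Type*} (d : V →₀ ℕ) : Set (V × ℕ) :=
  {pt | pt.2 < d pt.1}

/-- The Herzog–Hibi linear-quotients criterion for an (ordered, up to permutation)
family of monomials `u_1, …, u_m` (given by exponent vectors): there is an order
such that for all `j < i` there are `l < i` and a variable `x_p` with
`u_l / gcd(u_l, u_i) = x_p` and `x_p ∣ u_j / gcd(u_j, u_i)`. -/
def HasLinearQuotientsOrder {V : Type*} [DecidableEq V] (m : ℕ)
    (u : Fin m → (V →₀ ℕ)) : Prop :=
  ∃ σ : Equiv.Perm (Fin m), ∀ i j : Fin m, j < i →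
    ∃ l : Fin m, l < i ∧ ∃ p : V,
      (∀ q : V, u (σ l) q - u (σ i) q = if q = p then 1 else 0) ∧
      1 ≤ u (σ j) p - u (σ i) p

/-- The same criterion for the polarized (squarefree) monomials: for squarefree
monomials, `gcd` is intersection of supports and division is set difference, so
`u_l^{pol}/gcd(u_l^{pol},u_i^{pol})` is a variable `x_{p,t}` iff the difference of
polarization supports is a singleton. -/
def HasLinearQuotientsOrderPol {V : Type*} (m : ℕ) (u : Fin m → (V →₀ ℕ)) : Prop :=
  ∃ σ : Equiv.Perm (Fin m), ∀ i j : Fin m, j < i →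
    ∃ l : Fin m, l < i ∧ ∃ pv : V × ℕ,
      polSupp (u (σ l)) \ polSupp (u (σ i)) = {pv} ∧
      pv ∈ polSupp (u (σ j)) \ polSupp (u (σ i))

lemma key {V : Type*} [DecidableEq V] (a b : V →₀ ℕ) (pv : V × ℕ) :
    polSupp a \ polSupp b = ({pv} : Set (V × ℕ)) ↔
    (∀ q : V, a q - b q = if q = pv.1 then 1 else 0) ∧ pv.2 = b pv.1 := by
  constructor
  · intro h
    have mem : ∀ q s, ((s < a q ∧ ¬ s < b q) ↔ (q = pv.1 ∧ s = pv.2)) := by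
      intro q s
      have := Set.ext_iff.mp h (q, s)
      simpa [polSupp, Set.mem_diff, Prod.ext_iff] using this
    have hp : pv.2 = b pv.1 := by
      have h1 := mem pv.1 pv.2
      have h2 := mem pv.1 (b pv.1)
      simp at h1 h2
      omega
    refine ⟨fun q => ?_, hp⟩
    by_cases hq : q = pv.1
    · have h1 := mem pv.1 pv.2
      have h2 := mem pv.1 (pv.2 + 1)
      simp at h1 h2
      rw [hq]
      simp
      omega
    · have h1 := mem q (b q)
      simp [hq] at h1
      simp [hq]
      omega
  · rintro ⟨h, hp⟩
    ext ⟨q, t⟩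
    simp only [polSupp, Set.mem_diff, Set.mem_setOf_eq, Set.mem_singleton_iff, Prod.ext_iff]
    constructor
    · rintro ⟨ht, hbt⟩
      have := h q
      by_cases hq : q = pv.1
      · subst hq
        have := h pv.1
        simp at this
        exact ⟨rfl, by omega⟩
      · simp [hq] at this
        omega
    · rintro ⟨hq, ht⟩
      subst hq
      have := h pv.1
      simp at this
      omega

/-- A monomial ideal has linear quotients iff its polarization has linear
quotients, expressed via the Herzog–Hibi criterion on (minimal) generators. -/
theorem stmt12 {V : Type*} [DecidableEq V] (m : ℕ) (u : Fin m → (V →₀ ℕ)) :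
    HasLinearQuotientsOrder m u ↔ HasLinearQuotientsOrderPol m u := by
  constructor
  · rintro ⟨σ, h⟩
    refine ⟨σ, fun i j hji => ?_⟩
    obtain ⟨l, hl, p, h1, h2⟩ := h i j hji
    refine ⟨l, hl, (p, u (σ i) p), (key _ _ _).mpr ⟨h1, rfl⟩, ?_⟩
    simp [polSupp, Set.mem_diff]
    omega
  · rintro ⟨σ, h⟩
    refine ⟨σ, fun i j hji => ?_⟩
    obtain ⟨l, hl, pv, h1, h2⟩ := h i j hji
    obtain ⟨h1', hp⟩ := (key _ _ _).mp h1
    refine ⟨l, hl, pv.1, h1', ?_⟩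
    simp [polSupp, Set.mem_diff] at h2
    omega
end

section
/- Let u_k, u_i, u_j be monomials in K[x_1,...,x_n] and x_p a variable. If u_k/gcd(u_k,u_i) = x_p and x_p divides u_j/gcd(u_j,u_i), and t is the exponent of x_p in u_i, then: x_p^{t+1} divides u_k, x_p^{t+2} does not divide u_k, and x_p^{t+1} divides u_j. Consequently, in the polarized ring, u_k^{pol}/gcd(u_k^{pol},u_i^{pol}) = x_{p,t+1} and x_{p,t+1} divides u_j^{pol}/gcd(u_j^{pol},u_i^{pol}). -/
/-- Let `u_k, u_i, u_j` be monomials (exponent vectors) and `x_p` a variable with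
`u_k / gcd(u_k, u_i) = x_p` and `x_p ∣ u_j / gcd(u_j, u_i)`, and let `t = (u_i)_p`.
Then `x_p^{t+1} ∣ u_k`, `x_p^{t+2} ∤ u_k`, `x_p^{t+1} ∣ u_j`; consequently, in the
polarized ring `u_k^{pol}/gcd(u_k^{pol}, u_i^{pol})` is the single variable
`x_{p,t+1}` (0-indexed: `(p, t)`), and `x_{p,t+1}` divides
`u_j^{pol}/gcd(u_j^{pol}, u_i^{pol})`. -/
theorem stmt13 {V : Type*} [DecidableEq V] (uk ui uj : V →₀ ℕ) (p : V)
    (h1 : ∀ q : V, uk q - ui q = if q = p then 1 else 0)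
    (h2 : 1 ≤ uj p - ui p) :
    ui p + 1 ≤ uk p ∧ ¬ (ui p + 2 ≤ uk p) ∧ ui p + 1 ≤ uj p ∧
    polSupp uk \ polSupp ui = {(p, ui p)} ∧
    (p, ui p) ∈ polSupp uj \ polSupp ui := by
  have hp : uk p - ui p = 1 := by simpa using h1 p
  have hk : uk p = ui p + 1 := by omega
  refine ⟨by omega, by omega, by omega, ?_, ?_⟩
  · ext ⟨q, t⟩
    simp only [Set.mem_diff, Set.mem_singleton_iff, polSupp, Set.mem_setOf_eq, Prod.mk.injEq]
    by_cases hq : q = p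
    · subst hq; constructor
      · rintro ⟨ht1, ht2⟩; exact ⟨rfl, by omega⟩
      · rintro ⟨-, rfl⟩; exact ⟨by omega, by omega⟩
    · have := h1 q
      rw [if_neg hq] at this
      constructor
      · rintro ⟨ht1, ht2⟩; omega
      · rintro ⟨rfl, -⟩; exact absurd rfl hq
  · exact ⟨by simp [polSupp]; omega, by simp [polSupp]⟩
end

section
/- Let G be a graph with vertex x_1 not isolated. If C is a minimal vertex cover of G \ N_G[x_1] (the induced subgraph obtained by deleting the closed neighborhood of x_1), then C ∪ N_G(x_1) is a minimal vertex cover of G. Consequently, the maximum size of a minimal vertex cover of G \ N_G[x_1] plus deg_G(x_1) is at most the maximum size of a minimal vertex cover of G. -/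
/-- `C` is a vertex cover of the induced subgraph of `G` on `W`. -/
def IsVCOn {V : Type*} (G : SimpleGraph V) (W C : Set V) : Prop :=
  C ⊆ W ∧ ∀ ⦃u v : V⦄, G.Adj u v → u ∈ W → v ∈ W → u ∈ C ∨ v ∈ C

/-- `C` is a minimal vertex cover of the induced subgraph of `G` on `W`. -/
def IsMinVCOn {V : Type*} (G : SimpleGraph V) (W C : Set V) : Prop :=
  IsVCOn G W C ∧ ∀ D : Set V, D ⊂ C → ¬ IsVCOn G W D

/-- If `x₁` is a non-isolated vertex and `C` is a minimal vertex cover of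
`G \ N_G[x₁]`, then `C ∪ N_G(x₁)` is a minimal vertex cover of `G`; consequently
the maximum size of a minimal vertex cover of `G \ N_G[x₁]` plus `deg_G(x₁)` is at
most the maximum size of a minimal vertex cover of `G`. -/
theorem stmt17 {V : Type*} [Fintype V] (G : SimpleGraph V) (x : V)
    (hx : ∃ u, G.Adj x u) :
    (∀ C : Set V, IsMinVCOn G {u | u ≠ x ∧ ¬ G.Adj x u} C →
        IsMinVC G (C ∪ {u | G.Adj x u})) ∧
    sSup {c : ℕ | ∃ C : Set V, IsMinVCOn G {u | u ≠ x ∧ ¬ G.Adj x u} C ∧ C.ncard = c}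
        + (G.neighborSet x).ncard
      ≤ sSup {c : ℕ | ∃ C : Set V, IsMinVC G C ∧ C.ncard = c} := by
  set W : Set V := {u | u ≠ x ∧ ¬ G.Adj x u} with hWdef
  have main : ∀ C : Set V, IsMinVCOn G W C → IsMinVC G (C ∪ {u | G.Adj x u}) := by
    rintro C ⟨⟨hCW, hCcov⟩, hCmin⟩
    constructor
    · intro u v huv
      by_cases hu : G.Adj x u
      · exact Or.inl (Or.inr hu)
      by_cases hv : G.Adj x v
      · exact Or.inr (Or.inr hv)
      have hux : u ≠ x := by rintro rfl; exact hv huv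
      have hvx : v ≠ x := by rintro rfl; exact hu huv.symm
      rcases hCcov huv ⟨hux, hu⟩ ⟨hvx, hv⟩ with h | h
      · exact Or.inl (Or.inl h)
      · exact Or.inr (Or.inl h)
    · rintro D hD hDvc
      have hDW : D ∩ W ⊆ C := by
        rintro u ⟨hu, huW⟩
        rcases hD.1 hu with h | h
        · exact h
        · exact absurd h huW.2
      have hDWvc : IsVCOn G W (D ∩ W) := by
        refine ⟨Set.inter_subset_right, ?_⟩
        intro u v huv hu hv
        rcases hDvc huv with h | h
        · exact Or.inl ⟨h, hu⟩
        · exact Or.inr ⟨h, hv⟩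
      have hEq : D ∩ W = C := by
        by_contra hne
        exact hCmin _ (lt_of_le_of_ne hDW hne) hDWvc
      have hCsubD : C ⊆ D := by
        intro u hu
        have : u ∈ D ∩ W := hEq ▸ hu
        exact this.1
      obtain ⟨w, hw, hwD⟩ := Set.exists_of_ssubset hD
      have hwN : G.Adj x w := by
        rcases hw with h | h
        · exact absurd (hCsubD h) hwD
        · exact h
      have hxD : x ∈ D := by
        rcases hDvc hwN with h | h
        · exact h
        · exact absurd h hwD
      rcases hD.1 hxD with h | h
      · exact (hCW h).1 rfl
      · exact G.irrefl h
  refine ⟨main, ?_⟩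
  set A := {c : ℕ | ∃ C : Set V, IsMinVCOn G W C ∧ C.ncard = c} with hAdef
  set B := {c : ℕ | ∃ C : Set V, IsMinVC G C ∧ C.ncard = c} with hBdef
  have hBbdd : BddAbove B := by
    refine ⟨Fintype.card V, ?_⟩
    rintro c ⟨C, _, rfl⟩
    simpa [Set.ncard_univ] using Set.ncard_le_ncard (Set.subset_univ C) Set.finite_univ
  -- A is nonempty: a minimal vertex cover on W exists
  have hAne : A.Nonempty := by
    set S := {n : ℕ | ∃ C : Set V, IsVCOn G W C ∧ C.ncard = n} with hSdef
    have hSne : S.Nonempty := ⟨W.ncard, W, ⟨le_refl _, fun u v _ hu hv => Or.inl hu⟩, rfl⟩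
    obtain ⟨C, hC, hCn⟩ := Nat.sInf_mem hSne
    refine ⟨sInf S, C, ⟨hC, ?_⟩, hCn⟩
    intro D hD hDvc
    have hlt : D.ncard < C.ncard := Set.ncard_lt_ncard hD (Set.toFinite C)
    have : sInf S ≤ D.ncard := Nat.sInf_le ⟨D, hDvc, rfl⟩
    omega
  have hsupA : sSup A ∈ A := Nat.sSup_mem hAne (by
    refine ⟨Fintype.card V, ?_⟩
    rintro c ⟨C, _, rfl⟩
    simpa [Set.ncard_univ] using Set.ncard_le_ncard (Set.subset_univ C) Set.finite_univ)
  obtain ⟨C, hC, hCn⟩ := hsupA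
  have hdisj : Disjoint C {u | G.Adj x u} := by
    rw [Set.disjoint_left]
    intro u hu hu'
    exact (hC.1.1 hu).2 hu'
  have hcard : (C ∪ {u | G.Adj x u}).ncard = C.ncard + (G.neighborSet x).ncard := by
    rw [Set.ncard_union_eq hdisj (Set.toFinite _) (Set.toFinite _)]
    rfl
  have : sSup A + (G.neighborSet x).ncard ∈ B :=
    ⟨C ∪ {u | G.Adj x u}, main C hC, by rw [hcard, hCn]⟩
  exact le_csSup hBbdd this
end

section
/- Let G be a bipartite graph with bipartition V(G) = U ∪ W where U = {x_1,...,x_t}. Then (J(G)^k : x_1 x_2 ⋯ x_t) = J(G)^{k-1} for every k ≥ 1, where J(G) is the cover ideal of G. -/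
/-!
For bipartite `G`, `J(G)^k` is spanned by the monomials `x^a` with `a` a `k`-cover
(`a u + a v ≥ k` on every edge): a `(k+1)`-cover is a `k`-cover plus the indicator of the
vertex cover taking the vertices with `a v ≥ 1` from one side and those with `a v ≥ k + 1` from
the other. Multiplying by `∏_{x ∈ U} x` raises `a u + a v` by exactly one on every edge, so the
colon lowers `k` by one.
-/

open MvPolynomial

/-- The cover ideal `J(G) = ⋂_{{x_u,x_v} ∈ E(G)} (x_u, x_v)`. -/
noncomputable def coverIdeal (K : Type*) [Field K] {n : ℕ} (G : SimpleGraph (Fin n)) :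
    Ideal (MvPolynomial (Fin n) K) :=
  ⨅ (u : Fin n) (v : Fin n) (_ : G.Adj u v), Ideal.span {X u, X v}

namespace MvPolynomial

variable {σ R : Type*} [CommSemiring R]

theorem support_mul_monomial_one (p : MvPolynomial σ R) (e : σ →₀ ℕ) :
    (p * monomial e 1).support = p.support.map (addRightEmbedding e) :=
  AddMonoidAlgebra.support_coeff_mul_single p _ (by simp) _

theorem mem_ideal_span_monomial_image_of_isUpperSet {p : MvPolynomial σ R}
    {S : Set (σ →₀ ℕ)} (hS : IsUpperSet S) :
    p ∈ Ideal.span ((fun s => monomial s (1 : R)) '' S) ↔ ∀ μ ∈ p.support, μ ∈ S := by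
  rw [mem_ideal_span_monomial_image]
  exact forall₂_congr fun μ _ => ⟨fun ⟨s, hs, hle⟩ => hS hle hs, fun h => ⟨μ, h, le_rfl⟩⟩

theorem mem_ideal_span_X_pair {p : MvPolynomial σ R} {u v : σ} :
    p ∈ Ideal.span {X u, X v} ↔ ∀ μ ∈ p.support, 1 ≤ μ u + μ v := by
  rw [← Set.image_pair, mem_ideal_span_X_image]
  simp only [Set.mem_insert_iff, Set.mem_singleton_iff, exists_eq_or_imp, exists_eq_left]
  exact forall₂_congr fun μ _ => by omega

end MvPolynomial

namespace SimpleGraph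

variable {σ : Type*} (G : SimpleGraph σ)

/-- `a` is a `k`-cover of `G` in the sense of Herzog–Hibi–Trung. -/
def IsKCover (k : ℕ) (a : σ →₀ ℕ) : Prop :=
  ∀ u v, G.Adj u v → k ≤ a u + a v

variable {G}

theorem isUpperSet_setOf_isKCover (k : ℕ) : IsUpperSet {a | G.IsKCover k a} :=
  fun _ _ hab ha u v huv => (ha u v huv).trans (add_le_add (hab u) (hab v))

theorem isKCover_zero (a : σ →₀ ℕ) : G.IsKCover 0 a :=
  fun _ _ _ => Nat.zero_le _

theorem IsKCover.add {j l : ℕ} {a b : σ →₀ ℕ} (ha : G.IsKCover j a) (hb : G.IsKCover l b) :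
    G.IsKCover (j + l) (a + b) := fun u v huv => by
  have := ha u v huv
  have := hb u v huv
  simp only [Finsupp.add_apply]
  omega

theorem isKCover_add_iff {d k : ℕ} {a e : σ →₀ ℕ} (he : ∀ u v, G.Adj u v → e u + e v = d) :
    G.IsKCover k (a + e) ↔ G.IsKCover (k - d) a :=
  forall₃_congr fun u v huv => by
    have := he u v huv
    simp only [Finsupp.add_apply]
    omega

theorem IsBipartite.exists_isKCover_add (hG : G.IsBipartite) {k : ℕ} {a : σ →₀ ℕ}
    (ha : G.IsKCover (k + 1) a) : ∃ b e, G.IsKCover k b ∧ G.IsKCover 1 e ∧ b + e = a := by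
  obtain ⟨C⟩ := hG
  let P v := if C v = 0 then 0 < a v else k < a v
  have hP : ∀ v, P v → 0 < a v := fun v => by dsimp only [P]; split_ifs <;> omega
  let e := Finsupp.onFinset a.support (fun v => if P v then 1 else 0) fun v hv =>
    Finsupp.mem_support_iff.2 (hP v (by by_contra h; simp [h] at hv)).ne'
  have he v : e v = if P v then 1 else 0 := Finsupp.onFinset_apply
  have hea : e ≤ a := fun v => by
    rw [he]
    split_ifs with h
    exacts [hP v h, Nat.zero_le _]
  refine ⟨a - e, e, fun u v huv => ?_, fun u v huv => ?_, tsub_add_cancel_of_le hea⟩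
  all_goals
    have hsum := ha u v huv
    have hC := C.valid huv
    simp only [Finsupp.tsub_apply, he, P]
    generalize C u = x at *
    generalize C v = y at *
    fin_cases x <;> fin_cases y <;> simp_all <;> split_ifs <;> omega

end SimpleGraph

section SymbolicCoverIdeal

variable {σ : Type*} (R : Type*) [CommSemiring R] (G : SimpleGraph σ)

/-- The monomial description of the symbolic power `J(G)^{(k)}`. -/
noncomputable def symbolicCoverIdeal (k : ℕ) : Ideal (MvPolynomial σ R) :=
  Ideal.span ((fun a => monomial a 1) '' {a | G.IsKCover k a})

variable {R G}

theorem mem_symbolicCoverIdeal {k : ℕ} {p : MvPolynomial σ R} :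
    p ∈ symbolicCoverIdeal R G k ↔ ∀ μ ∈ p.support, G.IsKCover k μ :=
  mem_ideal_span_monomial_image_of_isUpperSet (SimpleGraph.isUpperSet_setOf_isKCover k)

theorem monomial_mem_symbolicCoverIdeal {k : ℕ} {a : σ →₀ ℕ} (ha : G.IsKCover k a) :
    monomial a (1 : R) ∈ symbolicCoverIdeal R G k :=
  Ideal.subset_span ⟨a, ha, rfl⟩

theorem symbolicCoverIdeal_zero : symbolicCoverIdeal R G 0 = ⊤ :=
  (Ideal.eq_top_iff_one _).2 (monomial_mem_symbolicCoverIdeal (SimpleGraph.isKCover_zero 0))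

theorem symbolicCoverIdeal_mul_le (j l : ℕ) :
    symbolicCoverIdeal R G j * symbolicCoverIdeal R G l ≤ symbolicCoverIdeal R G (j + l) := by
  rw [symbolicCoverIdeal, symbolicCoverIdeal, Ideal.span_mul_span', Ideal.span_le]
  rintro _ ⟨_, ⟨a, ha, rfl⟩, _, ⟨b, hb, rfl⟩, rfl⟩
  dsimp only
  rw [monomial_mul, one_mul]
  exact monomial_mem_symbolicCoverIdeal (ha.add hb)

theorem symbolicCoverIdeal_colon_monomial {d : ℕ} {e : σ →₀ ℕ}
    (he : ∀ u v, G.Adj u v → e u + e v = d) (k : ℕ) :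
    (symbolicCoverIdeal R G k).colon (Ideal.span {monomial e (1 : R)}) =
      symbolicCoverIdeal R G (k - d) := by
  ext p
  simp [mem_symbolicCoverIdeal, support_mul_monomial_one,
    SimpleGraph.isKCover_add_iff he]

end SymbolicCoverIdeal

section CoverIdeal

variable {K : Type*} [Field K] {n : ℕ} {G : SimpleGraph (Fin n)}

theorem coverIdeal_eq_symbolicCoverIdeal_one : coverIdeal K G = symbolicCoverIdeal K G 1 := by
  ext p
  simp only [coverIdeal, Ideal.mem_iInf, mem_ideal_span_X_pair, mem_symbolicCoverIdeal,
    SimpleGraph.IsKCover]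
  exact ⟨fun h μ hμ u v huv => h u v huv μ hμ, fun h u v huv μ hμ => h μ hμ u v huv⟩

theorem coverIdeal_pow_le_symbolicCoverIdeal (k : ℕ) :
    coverIdeal K G ^ k ≤ symbolicCoverIdeal K G k := by
  induction k with
  | zero => rw [pow_zero, symbolicCoverIdeal_zero, Ideal.one_eq_top]
  | succ k ih =>
    rw [pow_succ]
    exact (Ideal.mul_mono ih coverIdeal_eq_symbolicCoverIdeal_one.le).trans
      (symbolicCoverIdeal_mul_le k 1)

theorem monomial_mem_coverIdeal_pow (hG : G.IsBipartite) {k : ℕ} {a : Fin n →₀ ℕ}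
    (ha : G.IsKCover k a) : monomial a (1 : K) ∈ coverIdeal K G ^ k := by
  induction k generalizing a with
  | zero => simp
  | succ k ih =>
    obtain ⟨b, e, hb, he, rfl⟩ := hG.exists_isKCover_add ha
    have hbe : monomial (b + e) (1 : K) = monomial b 1 * monomial e 1 := by
      rw [monomial_mul, one_mul]
    rw [hbe, pow_succ]
    refine Ideal.mul_mem_mul (ih hb) ?_
    rw [coverIdeal_eq_symbolicCoverIdeal_one]
    exact monomial_mem_symbolicCoverIdeal he

theorem coverIdeal_pow_eq_symbolicCoverIdeal (hG : G.IsBipartite) (k : ℕ) :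
    coverIdeal K G ^ k = symbolicCoverIdeal K G k := by
  refine le_antisymm (coverIdeal_pow_le_symbolicCoverIdeal k) ?_
  rw [symbolicCoverIdeal, Ideal.span_le]
  rintro _ ⟨a, ha, rfl⟩
  exact monomial_mem_coverIdeal_pow hG ha

end CoverIdeal

open scoped Classical in
theorem stmt18_general {n : ℕ} (K : Type*) [Field K] (G : SimpleGraph (Fin n))
    (c : Fin n → Bool) (hbip : ∀ u v, G.Adj u v → c u ≠ c v)
    (k : ℕ) :
    ((coverIdeal K G) ^ k).colon
        (Ideal.span {∏ v ∈ Finset.univ.filter (fun v => c v = true),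
          (X v : MvPolynomial (Fin n) K)})
      = (coverIdeal K G) ^ (k - 1) := by
  have hG : G.IsBipartite := (SimpleGraph.Coloring.mk c (hbip _ _)).colorable
  have hprod := prod_X_pow (R := K) (fun _ => 1) (Finset.univ.filter (fun v => c v = true))
  simp only [pow_one] at hprod
  rw [hprod, coverIdeal_pow_eq_symbolicCoverIdeal hG, coverIdeal_pow_eq_symbolicCoverIdeal hG]
  refine symbolicCoverIdeal_colon_monomial (fun u v huv => ?_) k
  have := hbip u v huv
  cases hu : c u <;> cases hv : c v <;> simp_all [Finsupp.indicator_apply]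

open scoped Classical in
/-- Let `G` be bipartite with bipartition `U ∪ W` (given by a 2-coloring `c`, with
`U` the vertices colored `true`).  Then `(J(G)^k : ∏_{x ∈ U} x) = J(G)^{k-1}` for
every `k ≥ 1`. -/
theorem stmt18 {n : ℕ} (K : Type*) [Field K] (G : SimpleGraph (Fin n))
    (c : Fin n → Bool) (hbip : ∀ u v, G.Adj u v → c u ≠ c v)
    (k : ℕ) (hk : 1 ≤ k) :
    ((coverIdeal K G) ^ k).colon
        (Ideal.span {∏ v ∈ Finset.univ.filter (fun v => c v = true),
          (X v : MvPolynomial (Fin n) K)})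
      = (coverIdeal K G) ^ (k - 1) :=
  stmt18_general K G c hbip k
end
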